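/- Vacuous merge elimination: let A = ⟦e₁, nl₁, ol₂, e₂⟧ be a well-formed merged environment where e₂ is a simple environment. If ol₂ ≤ nl₁ − lev(e₁), then A rewrites by the reading and merging rules to any simple environment that e₁ rewrites to. -/
import Mathlib


mutual
inductive STerm : Type
  | const : ℕ → STerm
  | var   : ℕ → STerm
  | app   : STerm → STerm → STerm
  | lam   : STerm → STerm
  | susp  : STerm → ℕ → ℕ → SEnv → STerm
inductive SEnv : Type
  | nil   : SEnv
  | cons  : STerm → ℕ → SEnv → SEnv
  | merge : SEnv → ℕ → ℕ → SEnv → SEnv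
end

/-- Length of an environment. -/
def SEnv.len : SEnv → ℕ
  | .nil => 0
  | .cons _ _ e => 1 + e.len
  | .merge e1 nl1 ol2 _ => e1.len + (ol2 - nl1)

/-- Level of an environment. -/
def SEnv.lev : SEnv → ℕ
  | .nil => 0
  | .cons _ n _ => n
  | .merge _ nl1 ol2 e2 => e2.lev + (nl1 - ol2)

mutual
/-- Well-formedness of suspension terms. -/
def STerm.wf : STerm → Prop
  | .const _ => True
  | .var _ => True
  | .app t1 t2 => t1.wf ∧ t2.wf
  | .lam t => t.wf
  | .susp t ol nl e => t.wf ∧ e.wf ∧ e.len = ol ∧ e.lev ≤ nl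
/-- Well-formedness of suspension environments. -/
def SEnv.wf : SEnv → Prop
  | .nil => True
  | .cons t n e => t.wf ∧ e.wf ∧ e.lev ≤ n
  | .merge e1 nl1 ol2 e2 => e1.wf ∧ e2.wf ∧ e2.len = ol2 ∧ e1.lev ≤ nl1
end

/-- A simple environment: no merged environments on the top spine. -/
def SEnv.simple : SEnv → Prop
  | .nil => True
  | .cons _ _ e => e.simple
  | .merge _ _ _ _ => False

mutual
/-- One step of the reading rules (r1)-(r6) and merging rules (m1)-(m6),
applied anywhere (compatible closure). -/
inductive StepT : STerm → STerm → Prop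
  | r1 : ∀ (c ol nl : ℕ) (e : SEnv), StepT (.susp (.const c) ol nl e) (.const c)
  | r2 : ∀ (i nl : ℕ), StepT (.susp (.var i) 0 nl .nil) (.var (i + nl))
  | r3 : ∀ (ol nl : ℕ) (t : STerm) (l : ℕ) (e : SEnv),
      StepT (.susp (.var 1) ol nl (.cons t l e)) (.susp t 0 (nl - l) .nil)
  | r4 : ∀ (i ol nl : ℕ) (t : STerm) (l : ℕ) (e : SEnv), 1 < i →
      StepT (.susp (.var i) ol nl (.cons t l e)) (.susp (.var (i - 1)) (ol - 1) nl e)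
  | r5 : ∀ (t1 t2 : STerm) (ol nl : ℕ) (e : SEnv),
      StepT (.susp (.app t1 t2) ol nl e) (.app (.susp t1 ol nl e) (.susp t2 ol nl e))
  | r6 : ∀ (t : STerm) (ol nl : ℕ) (e : SEnv),
      StepT (.susp (.lam t) ol nl e)
            (.lam (.susp t (ol + 1) (nl + 1) (.cons (.var 1) (nl + 1) e)))
  | m1 : ∀ (t : STerm) (ol1 nl1 : ℕ) (e1 : SEnv) (ol2 nl2 : ℕ) (e2 : SEnv),
      StepT (.susp (.susp t ol1 nl1 e1) ol2 nl2 e2)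
            (.susp t (ol1 + (ol2 - nl1)) (nl2 + (nl1 - ol2)) (.merge e1 nl1 ol2 e2))
  | appL : ∀ (t1 t1' t2 : STerm), StepT t1 t1' → StepT (.app t1 t2) (.app t1' t2)
  | appR : ∀ (t1 t2 t2' : STerm), StepT t2 t2' → StepT (.app t1 t2) (.app t1 t2')
  | lamC : ∀ (t t' : STerm), StepT t t' → StepT (.lam t) (.lam t')
  | suspT : ∀ (t t' : STerm) (ol nl : ℕ) (e : SEnv),
      StepT t t' → StepT (.susp t ol nl e) (.susp t' ol nl e)
  | suspE : ∀ (t : STerm) (ol nl : ℕ) (e e' : SEnv),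
      StepE e e' → StepT (.susp t ol nl e) (.susp t ol nl e')
inductive StepE : SEnv → SEnv → Prop
  | m2 : ∀ (e1 : SEnv) (nl1 : ℕ), StepE (.merge e1 nl1 0 .nil) e1
  | m3 : ∀ (ol2 : ℕ) (e2 : SEnv), StepE (.merge .nil 0 ol2 e2) e2
  | m4 : ∀ (nl1 ol2 : ℕ) (t : STerm) (l : ℕ) (e2 : SEnv), 1 ≤ nl1 →
      StepE (.merge .nil nl1 ol2 (.cons t l e2)) (.merge .nil (nl1 - 1) (ol2 - 1) e2)
  | m5 : ∀ (t : STerm) (n : ℕ) (e1 : SEnv) (nl1 ol2 : ℕ) (s : STerm) (l : ℕ) (e2 : SEnv),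
      n < nl1 →
      StepE (.merge (.cons t n e1) nl1 ol2 (.cons s l e2))
            (.merge (.cons t n e1) (nl1 - 1) (ol2 - 1) e2)
  | m6 : ∀ (t : STerm) (n : ℕ) (e1 : SEnv) (ol2 : ℕ) (s : STerm) (l : ℕ) (e2 : SEnv),
      StepE (.merge (.cons t n e1) n ol2 (.cons s l e2))
            (.cons (.susp t ol2 l (.cons s l e2)) (l + (n - ol2))
                   (.merge e1 n ol2 (.cons s l e2)))
  | consT : ∀ (t t' : STerm) (n : ℕ) (e : SEnv),
      StepT t t' → StepE (.cons t n e) (.cons t' n e)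
  | consE : ∀ (t : STerm) (n : ℕ) (e e' : SEnv),
      StepE e e' → StepE (.cons t n e) (.cons t n e')
  | mergeL : ∀ (e1 e1' : SEnv) (nl1 ol2 : ℕ) (e2 : SEnv),
      StepE e1 e1' → StepE (.merge e1 nl1 ol2 e2) (.merge e1' nl1 ol2 e2)
  | mergeR : ∀ (e1 : SEnv) (nl1 ol2 : ℕ) (e2 e2' : SEnv),
      StepE e2 e2' → StepE (.merge e1 nl1 ol2 e2) (.merge e1 nl1 ol2 e2')
end


mutual
theorem wf_T : ∀ {t t' : STerm}, StepT t t' → t.wf → t'.wf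
  | _, _, .r1 c ol nl e, hw => trivial
  | _, _, .r2 i nl, hw => trivial
  | _, _, .r3 ol nl t l e, hw => by
      obtain ⟨-, ⟨ht, -, -⟩, -, -⟩ := hw
      exact ⟨ht, trivial, rfl, Nat.zero_le _⟩
  | _, _, .r4 i ol nl t l e hi, hw => by
      obtain ⟨-, ⟨-, he, hv⟩, hlen, hl⟩ := hw
      simp only [SEnv.len] at hlen
      exact ⟨trivial, he, by omega, by simp only [SEnv.lev] at hl; omega⟩
  | _, _, .r5 t1 t2 ol nl e, hw => by
      obtain ⟨⟨h1, h2⟩, he, hlen, hl⟩ := hw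
      exact ⟨⟨h1, he, hlen, hl⟩, h2, he, hlen, hl⟩
  | _, _, .r6 t ol nl e, hw => by
      obtain ⟨ht, he, hlen, hl⟩ := hw
      refine ⟨ht, ⟨trivial, he, by omega⟩, ?_, ?_⟩
      · show 1 + e.len = ol + 1; omega
      · show nl + 1 ≤ nl + 1; omega
  | _, _, .m1 t ol1 nl1 e1 ol2 nl2 e2, hw => by
      obtain ⟨⟨ht, h1, hl1, hv1⟩, h2, hl2, hv2⟩ := hw
      refine ⟨ht, ⟨h1, h2, hl2, hv1⟩, ?_, ?_⟩
      · show e1.len + (ol2 - nl1) = ol1 + (ol2 - nl1); omega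
      · show e2.lev + (nl1 - ol2) ≤ nl2 + (nl1 - ol2); omega
  | _, _, .appL t1 t1' t2 h, hw => ⟨wf_T h hw.1, hw.2⟩
  | _, _, .appR t1 t2 t2' h, hw => ⟨hw.1, wf_T h hw.2⟩
  | _, _, .lamC t t' h, hw => by show t'.wf; exact wf_T h hw
  | _, _, .suspT t t' ol nl e h, hw => ⟨wf_T h hw.1, hw.2⟩
  | _, _, .suspE t ol nl e e' h, hw => by
      obtain ⟨ht, he, hlen, hl⟩ := hw
      exact ⟨ht, wf_E h he, by rw [len_E h he]; exact hlen,
        le_trans (lev_E h he) hl⟩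

theorem wf_E : ∀ {e e' : SEnv}, StepE e e' → e.wf → e'.wf
  | _, _, .m2 d1 nl1, hw => hw.1
  | _, _, .m3 ol2 d2, hw => hw.2.1
  | _, _, .m4 nl1 ol2 t l d2 h1, hw => by
      obtain ⟨-, ⟨-, h2, -⟩, hlen, -⟩ := hw
      simp only [SEnv.len] at hlen
      exact ⟨trivial, h2, by omega, Nat.zero_le _⟩
  | _, _, .m5 t n d1 nl1 ol2 s l d2 hn, hw => by
      obtain ⟨h1, ⟨-, h2, -⟩, hlen, hv⟩ := hw
      simp only [SEnv.len] at hlen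
      simp only [SEnv.lev] at hv
      exact ⟨h1, h2, by omega, by simp only [SEnv.lev]; omega⟩
  | _, _, .m6 t n d1 ol2 s l d2, hw => by
      obtain ⟨⟨ht, h1, hv1⟩, hc, hlen, hv⟩ := hw
      refine ⟨⟨ht, hc, hlen, le_refl l⟩, ⟨h1, hc, hlen, hv1⟩, ?_⟩
      simp only [SEnv.lev]
      exact le_refl _
  | _, _, .consT t t' n e h, hw => ⟨wf_T h hw.1, hw.2⟩
  | _, _, .consE t n e e' h, hw => by
      obtain ⟨ht, he, hl⟩ := hw
      exact ⟨ht, wf_E h he, le_trans (lev_E h he) hl⟩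
  | _, _, .mergeL d1 d1' nl1 ol2 d2 h, hw => by
      obtain ⟨h1, h2, hlen, hv⟩ := hw
      exact ⟨wf_E h h1, h2, hlen, le_trans (lev_E h h1) hv⟩
  | _, _, .mergeR d1 nl1 ol2 d2 d2' h, hw => by
      obtain ⟨h1, h2, hlen, hv⟩ := hw
      exact ⟨h1, wf_E h h2, by rw [len_E h h2]; exact hlen, hv⟩

theorem len_E : ∀ {e e' : SEnv}, StepE e e' → e.wf → e'.len = e.len
  | _, _, .m2 d1 nl1, hw => by simp [SEnv.len]
  | _, _, .m3 ol2 d2, hw => by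
      obtain ⟨-, -, hlen, -⟩ := hw
      simp only [SEnv.len]; omega
  | _, _, .m4 nl1 ol2 t l d2 h1, hw => by simp only [SEnv.len]; omega
  | _, _, .m5 t n d1 nl1 ol2 s l d2 hn, hw => by simp only [SEnv.len]; omega
  | _, _, .m6 t n d1 ol2 s l d2, hw => by simp only [SEnv.len]; ring
  | _, _, .consT t t' n e h, hw => by simp only [SEnv.len]
  | _, _, .consE t n e e' h, hw => by
      obtain ⟨-, he, -⟩ := hw
      simp only [SEnv.len]; rw [len_E h he]
  | _, _, .mergeL d1 d1' nl1 ol2 d2 h, hw => by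
      simp only [SEnv.len]; rw [len_E h hw.1]
  | _, _, .mergeR d1 nl1 ol2 d2 d2' h, hw => by simp only [SEnv.len]

theorem lev_E : ∀ {e e' : SEnv}, StepE e e' → e.wf → e'.lev ≤ e.lev
  | _, _, .m2 d1 nl1, hw => by
      obtain ⟨-, -, -, hv⟩ := hw
      simp only [SEnv.lev]; omega
  | _, _, .m3 ol2 d2, hw => by simp only [SEnv.lev]; omega
  | _, _, .m4 nl1 ol2 t l d2 h1, hw => by
      obtain ⟨-, ⟨-, -, hl⟩, -, -⟩ := hw
      simp only [SEnv.lev]; omega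
  | _, _, .m5 t n d1 nl1 ol2 s l d2 hn, hw => by
      obtain ⟨-, ⟨-, -, hl⟩, -, -⟩ := hw
      simp only [SEnv.lev]; omega
  | _, _, .m6 t n d1 ol2 s l d2, hw => by simp only [SEnv.lev]; exact le_refl _
  | _, _, .consT t t' n e h, hw => by simp only [SEnv.lev]; omega
  | _, _, .consE t n e e' h, hw => by simp only [SEnv.lev]; omega
  | _, _, .mergeL d1 d1' nl1 ol2 d2 h, hw => by simp only [SEnv.lev]; omega
  | _, _, .mergeR d1 nl1 ol2 d2 d2' h, hw => by
      obtain ⟨-, h2, -, -⟩ := hw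
      simp only [SEnv.lev]
      have := lev_E h h2; omega
end

theorem chain_wf {e C : SEnv} (h : Relation.ReflTransGen StepE e C) (hw : e.wf) :
    C.wf ∧ C.lev ≤ e.lev := by
  induction h with
  | refl => exact ⟨hw, le_refl _⟩
  | tail _ hstep ih =>
      exact ⟨wf_E hstep ih.1, le_trans (lev_E hstep ih.1) ih.2⟩

theorem chain_mergeL {e C : SEnv} (h : Relation.ReflTransGen StepE e C)
    (nl1 ol2 : ℕ) (e2 : SEnv) :
    Relation.ReflTransGen StepE (SEnv.merge e nl1 ol2 e2) (SEnv.merge C nl1 ol2 e2) := by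
  induction h with
  | refl => exact .refl
  | tail _ hstep ih => exact ih.tail (.mergeL _ _ _ _ _ hstep)

theorem strip : ∀ (ol2 : ℕ) (e2 : SEnv), e2.simple → e2.len = ol2 →
    ∀ (C : SEnv), C.simple → ∀ (nl1 : ℕ), C.lev + ol2 ≤ nl1 →
    Relation.ReflTransGen StepE (SEnv.merge C nl1 ol2 e2) C := by
  intro ol2
  induction ol2 with
  | zero =>
      intro e2 hs hlen C hC nl1 hlev
      cases e2 with
      | nil => exact Relation.ReflTransGen.single (.m2 C nl1)
      | cons s l e2' => simp [SEnv.len] at hlen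
      | merge => exact absurd hs (by simp [SEnv.simple])
  | succ k ih =>
      intro e2 hs hlen C hC nl1 hlev
      cases e2 with
      | nil => simp [SEnv.len] at hlen
      | cons s l e2' =>
          simp only [SEnv.len] at hlen
          simp only [SEnv.simple] at hs
          cases C with
          | nil =>
              refine Relation.ReflTransGen.head (.m4 nl1 (k+1) s l e2' ?_) ?_
              · simp only [SEnv.lev] at hlev; omega
              · have := ih e2' hs (by omega) .nil trivial (nl1 - 1)
                  (by simp only [SEnv.lev] at hlev ⊢; omega)
                simpa using this
          | cons t n C' =>
              refine Relation.ReflTransGen.head (.m5 t n C' nl1 (k+1) s l e2' ?_) ?_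
              · simp only [SEnv.lev] at hlev; omega
              · have := ih e2' hs (by omega) (.cons t n C') hC (nl1 - 1)
                  (by simp only [SEnv.lev] at hlev ⊢; omega)
                simpa using this
          | merge => exact absurd hC (by simp [SEnv.simple])
      | merge => exact absurd hs (by simp [SEnv.simple])

/-- vacuous merge elimination. -/
theorem stmt6 (e1 e2 : SEnv) (nl1 ol2 : ℕ)
    (hwf : (SEnv.merge e1 nl1 ol2 e2).wf) (hs : e2.simple)
    (hle : ol2 ≤ nl1 - e1.lev) :
    ∀ C : SEnv, C.simple → Relation.ReflTransGen StepE e1 C →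
      Relation.ReflTransGen StepE (SEnv.merge e1 nl1 ol2 e2) C := by
  intro C hC hchain
  simp [SEnv.wf] at hwf
  obtain ⟨he1, he2, hlen, hlev⟩ := hwf
  obtain ⟨_, hCl⟩ := chain_wf hchain he1
  exact (chain_mergeL hchain nl1 ol2 e2).trans
    (strip ol2 e2 hs hlen C hC nl1 (by omega))
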